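/- arXiv:0911.5715 — 2 statements merged into one kernel-verified Lean document; each statement's English description precedes it below -/
import Mathlib

section
/- Let n ≥ 2 be an integer and let φ be an orientation-preserving homeomorphism of the unit circle {z ∈ ℂ : |z| = 1} such that φ(1) = 1 and φ(z^n) = φ(z)^n for all z on the unit circle. Then φ fixes every n^k-th root of unity: for every z on the unit circle with z^(n^k) = 1 for some k ∈ ℕ, one has φ(z) = z. -/
/-! With `e t = exp (2πit)`, the lift turns `φ (z ^ n) = φ z ^ n` into `f (n x) - n f x ∈ ℤ`.
A continuous integer-valued function is constant, so `g = f - f 0` satisfies `g (n x) = n g x`,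
and also `g (x + m) = g x + m` for `m ∈ ℤ`. Hence `n ^ k g (m / n ^ k) = g m = m`, so `f` moves
every `m / n ^ k` by the integer `f 0` and `φ` fixes `e (m / n ^ k)`. -/

open Complex Real
open scoped AddConstMap

theorem PreconnectedSpace.eq_of_continuous_of_forall_int {X : Type*} [TopologicalSpace X]
    [PreconnectedSpace X] {F : X → ℝ} (hF : Continuous F) (hint : ∀ x, ∃ m : ℤ, F x = m)
    (x y : X) : F x = F y := by
  choose G hG using hint
  have hGc : Continuous G :=
    Int.isClosedEmbedding_coe_real.continuous_iff.2 (by simpa only [Function.comp_def, ← hG])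
  rw [hG, hG, PreconnectedSpace.constant inferInstance hGc]

section

variable {f : ℝ → ℝ} {a : ℝ}

theorem map_mul_sub_map_zero_of_forall_int (hf : Continuous f)
    (hint : ∀ x, ∃ m : ℤ, f (a * x) - a * f x = m) (x : ℝ) :
    f (a * x) - f 0 = a * (f x - f 0) := by
  have := PreconnectedSpace.eq_of_continuous_of_forall_int (by fun_prop) hint x 0
  rw [mul_zero] at this
  linarith

theorem map_pow_mul_sub_map_zero (h : ∀ x, f (a * x) - f 0 = a * (f x - f 0)) (k : ℕ) (x : ℝ) :
    f (a ^ k * x) - f 0 = a ^ k * (f x - f 0) := by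
  induction k with
  | zero => simp
  | succ k ih => rw [pow_succ', mul_assoc, h, ih, mul_assoc]

end

theorem AddConstMap.map_eq_add_map_zero_of_pow_mul_eq_int (f : ℝ →+c[1, 1] ℝ) {a : ℝ}
    (ha : a ≠ 0) (h : ∀ x, f (a * x) - f 0 = a * (f x - f 0)) {k : ℕ} {t : ℝ} {m : ℤ}
    (ht : a ^ k * t = m) : f t = t + f 0 := by
  have hk := map_pow_mul_sub_map_zero h k t
  rw [ht, ← add_zero (m : ℝ), AddConstMapClass.map_int_add, add_sub_cancel_left, ← ht] at hk
  have := mul_left_cancel₀ (pow_ne_zero k ha) hk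
  linarith

noncomputable def expTwoPiI (t : ℝ) : ℂ := exp (2 * π * I * t)

theorem expTwoPiI_eq_expTwoPiI_iff {s t : ℝ} :
    expTwoPiI s = expTwoPiI t ↔ ∃ m : ℤ, s = t + m := by
  rw [expTwoPiI, expTwoPiI, exp_eq_exp_iff_exists_int]
  refine exists_congr fun m => ?_
  rw [← ofReal_inj]
  constructor <;> intro h
  · have hpi : (2 * π * I : ℂ) ≠ 0 := by simp [pi_ne_zero]
    apply mul_left_cancel₀ hpi
    push_cast
    linear_combination h
  · push_cast at h
    rw [h]
    ring

theorem expTwoPiI_zero : expTwoPiI 0 = 1 := by simp [expTwoPiI]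

theorem expTwoPiI_pow (t : ℝ) (N : ℕ) : expTwoPiI t ^ N = expTwoPiI (N * t) := by
  rw [expTwoPiI, expTwoPiI, ← Complex.exp_nat_mul]
  push_cast
  ring_nf

theorem norm_expTwoPiI (t : ℝ) : ‖expTwoPiI t‖ = 1 := by
  rw [expTwoPiI, norm_exp]
  simp

theorem exists_expTwoPiI_eq_of_pow_eq_one {z : ℂ} {N : ℕ} (hN : N ≠ 0) (hz : z ^ N = 1) :
    ∃ i : ℕ, expTwoPiI (i / N) = z := by
  have : NeZero N := ⟨hN⟩
  obtain ⟨i, -, hi⟩ := (isPrimitiveRoot_exp N hN).eq_pow_of_pow_eq_one hz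
  refine ⟨i, ?_⟩
  rw [← hi, ← Complex.exp_nat_mul, expTwoPiI]
  push_cast
  ring_nf

theorem fixes_roots_of_unity_general (n : ℕ) (hn : 2 ≤ n) (φ : ℂ → ℂ) (f : ℝ → ℝ)
    (hf_cont : Continuous f)
    (hf_per : ∀ x : ℝ, f (x + 1) = f x + 1)
    (hlift : ∀ x : ℝ, φ (Complex.exp (2 * Real.pi * Complex.I * x)) =
      Complex.exp (2 * Real.pi * Complex.I * (f x)))
    (hfix : φ 1 = 1)
    (hcomm : ∀ z : ℂ, ‖z‖ = 1 → φ (z ^ n) = (φ z) ^ n) :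
    ∀ z : ℂ, ‖z‖ = 1 → (∃ k : ℕ, z ^ (n ^ k) = 1) → φ z = z := by
  have hφ : ∀ x, φ (expTwoPiI x) = expTwoPiI (f x) := hlift
  have hint : ∀ x, ∃ m : ℤ, f (n * x) - n * f x = m := fun x => by
    have hx := hcomm _ (norm_expTwoPiI x)
    rw [expTwoPiI_pow, hφ, hφ, expTwoPiI_pow] at hx
    obtain ⟨m, hm⟩ := expTwoPiI_eq_expTwoPiI_iff.1 hx
    exact ⟨m, by linarith⟩
  obtain ⟨c, hc⟩ := expTwoPiI_eq_expTwoPiI_iff.1 <| (hφ 0).symm.trans <| by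
    rw [expTwoPiI_zero, hfix]
  rintro z - ⟨k, hk⟩
  obtain ⟨i, rfl⟩ := exists_expTwoPiI_eq_of_pow_eq_one (pow_ne_zero k (by omega)) hk
  have hn0 : (n : ℝ) ≠ 0 := by exact_mod_cast (by omega : n ≠ 0)
  have hfi := AddConstMap.map_eq_add_map_zero_of_pow_mul_eq_int ⟨f, hf_per⟩ hn0
    (map_mul_sub_map_zero_of_forall_int hf_cont hint) (k := k) (t := i / (n ^ k : ℕ)) (m := i)
    (by push_cast; field_simp)
  rw [hφ, expTwoPiI_eq_expTwoPiI_iff]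
  exact ⟨c, by simpa [hc] using hfi⟩

/-- An orientation-preserving homeomorphism of the unit circle (given by a continuous,
strictly increasing lift `f` with `f (x + 1) = f x + 1`) that fixes `1` and commutes
with `z ↦ z ^ n` (`n ≥ 2`) fixes every `n ^ k`-th root of unity. -/
theorem fixes_roots_of_unity (n : ℕ) (hn : 2 ≤ n) (φ : ℂ → ℂ) (f : ℝ → ℝ)
    (hf_cont : Continuous f) (hf_mono : StrictMono f)
    (hf_per : ∀ x : ℝ, f (x + 1) = f x + 1)
    (hlift : ∀ x : ℝ, φ (Complex.exp (2 * Real.pi * Complex.I * x)) =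
      Complex.exp (2 * Real.pi * Complex.I * (f x)))
    (hfix : φ 1 = 1)
    (hcomm : ∀ z : ℂ, ‖z‖ = 1 → φ (z ^ n) = (φ z) ^ n) :
    ∀ z : ℂ, ‖z‖ = 1 → (∃ k : ℕ, z ^ (n ^ k) = 1) → φ z = z :=
  fixes_roots_of_unity_general n hn φ f hf_cont hf_per hlift hfix hcomm
end

section
/- Let n ≥ 2 be an integer. Any orientation-preserving homeomorphism φ of the unit circle {z ∈ ℂ : |z| = 1} satisfying φ(1) = 1 and φ(z^n) = φ(z)^n for all z on the unit circle is the identity map. -/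
/-!
Write `e(x) = exp(2πix)`. Since `φ(e(x)) = e(f x)`, the relation `φ(z^n) = φ(z)^n` says that
`f(nx) - n f(x)` is an integer for every `x`; being continuous, it is constant. Hence
`g = f - f 0` is a degree-one circle lift with `g(nx) = n g(x)`. The displacement `g(x) - x` is
bounded by `1` and is multiplied by `n` under `x ↦ nx`, so it vanishes. Thus `f x = x + f 0`,
and `φ(1) = 1` forces `f 0 ∈ ℤ`, so `φ(e(x)) = e(x)`.
-/

open Complex Real

theorem eq_of_continuous_of_forall_exists_int {X : Type*} [TopologicalSpace X]
    [PreconnectedSpace X] {u : X → ℝ} (hu : Continuous u) (hint : ∀ x, ∃ m : ℤ, u x = m)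
    (x y : X) : u x = u y :=
  isPreconnected_univ.constant_of_mapsTo Int.isClosedEmbedding_coe_real.isInducing.isDiscrete_range
    hu.continuousOn (fun x _ => (hint x).imp fun _ h => h.symm) (Set.mem_univ x) (Set.mem_univ y)

theorem eq_zero_of_abs_le_of_map_mul {u : ℝ → ℝ} {c C : ℝ} (hc : 1 < c)
    (hC : ∀ x, |u x| ≤ C) (hu : ∀ x, u (c * x) = c * u x) (x : ℝ) : u x = 0 := by
  have hpow : ∀ (k : ℕ) x, u (c ^ k * x) = c ^ k * u x := fun k => by
    induction k with
    | zero => simp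
    | succ k ih => intro x; rw [pow_succ, mul_assoc, ih, hu, mul_assoc]
  by_contra hne
  obtain ⟨k, hk⟩ := pow_unbounded_of_one_lt (C / |u x|) hc
  have hCk := hC (c ^ k * x)
  rw [hpow, abs_mul, abs_of_pos (pow_pos (by linarith) k)] at hCk
  rw [div_lt_iff₀ (abs_pos.2 hne)] at hk
  linarith

theorem CircleDeg1Lift.eq_one_of_map_mul (g : CircleDeg1Lift) {c : ℝ} (hc : 1 < c)
    (hg : ∀ x, g (c * x) = c * g x) : g = 1 := by
  have hg0 : g 0 = 0 := by
    have := hg 0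
    rw [mul_zero] at this
    nlinarith
  have hdisplacement : ∀ x, |g x - x| ≤ 1 := fun x => by
    have h1 := g.le_map_of_map_zero x
    have h2 := g.map_le_of_map_zero x
    rw [hg0] at h1 h2
    rw [abs_le]
    constructor <;> linarith [Int.ceil_lt_add_one x, Int.lt_floor_add_one x]
  ext x
  exact sub_eq_zero.1 <| eq_zero_of_abs_le_of_map_mul hc hdisplacement (fun x => by rw [hg]; ring) x

theorem exp_two_pi_mul_I_eq_iff {a b : ℝ} :
    exp (2 * π * I * a) = exp (2 * π * I * b) ↔ ∃ m : ℤ, a = b + m := by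
  rw [exp_eq_exp_iff_exists_int]
  refine exists_congr fun m => ?_
  rw [show 2 * π * I * (b : ℂ) + m * (2 * π * I) = 2 * π * I * ((b + m : ℝ) : ℂ) by push_cast; ring,
    mul_right_inj' two_pi_I_ne_zero, ofReal_inj]

theorem norm_exp_two_pi_mul_I (x : ℝ) : ‖exp (2 * π * I * x)‖ = 1 := by
  rw [show 2 * π * I * (x : ℂ) = ((2 * π * x : ℝ) : ℂ) * I by push_cast; ring]
  exact norm_exp_ofReal_mul_I _

theorem exp_two_pi_mul_I_pow (x : ℝ) (n : ℕ) :
    exp (2 * π * I * x) ^ n = exp (2 * π * I * ((n * x : ℝ) : ℂ)) := by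
  rw [← Complex.exp_nat_mul]
  push_cast
  ring_nf

theorem exists_exp_two_pi_mul_I_eq {z : ℂ} (hz : ‖z‖ = 1) : ∃ x : ℝ, exp (2 * π * I * x) = z := by
  refine ⟨z.arg / (2 * π), ?_⟩
  conv_rhs => rw [← norm_mul_exp_arg_mul_I z, hz]
  push_cast
  field_simp

/-- An orientation-preserving homeomorphism of the unit circle (given by a continuous,
strictly increasing lift `f` with `f (x + 1) = f x + 1`) that fixes `1` and commutes
with `z ↦ z ^ n` (`n ≥ 2`) is the identity on the unit circle. -/
theorem identity_on_circle (n : ℕ) (hn : 2 ≤ n) (φ : ℂ → ℂ) (f : ℝ → ℝ)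
    (hf_cont : Continuous f) (hf_mono : StrictMono f)
    (hf_per : ∀ x : ℝ, f (x + 1) = f x + 1)
    (hlift : ∀ x : ℝ, φ (Complex.exp (2 * Real.pi * Complex.I * x)) =
      Complex.exp (2 * Real.pi * Complex.I * (f x)))
    (hfix : φ 1 = 1)
    (hcomm : ∀ z : ℂ, ‖z‖ = 1 → φ (z ^ n) = (φ z) ^ n) :
    ∀ z : ℂ, ‖z‖ = 1 → φ z = z := by
  have hint : ∀ x : ℝ, ∃ m : ℤ, f (n * x) - n * f x = m := fun x => by
    have h := hcomm _ (norm_exp_two_pi_mul_I x)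
    rw [exp_two_pi_mul_I_pow, hlift, hlift, exp_two_pi_mul_I_pow, exp_two_pi_mul_I_eq_iff] at h
    exact h.imp fun m hm => by linarith
  have hconst (x : ℝ) : f (n * x) - n * f x = f 0 - n * f 0 := by
    simpa using eq_of_continuous_of_forall_exists_int
      (u := fun x => f (n * x) - n * f x) (by fun_prop) hint x 0
  obtain ⟨m, hm⟩ : ∃ m : ℤ, f 0 = 0 + m := by
    rw [← exp_two_pi_mul_I_eq_iff, ← hlift]
    simpa using hfix
  let g : CircleDeg1Lift :=
    ⟨⟨fun x => f x - f 0, fun _ _ h => sub_le_sub_right (hf_mono.monotone h) _⟩,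
      fun x => by simp only [hf_per]; ring⟩
  have hg : g = 1 :=
    g.eq_one_of_map_mul (c := n) (by exact_mod_cast hn)
      fun x => show f (n * x) - f 0 = n * (f x - f 0) by linarith [hconst x]
  intro z hz
  obtain ⟨x, rfl⟩ := exists_exp_two_pi_mul_I_eq hz
  rw [hlift, exp_two_pi_mul_I_eq_iff]
  refine ⟨m, ?_⟩
  have hgx : f x - f 0 = x := congrArg (· x) hg
  linarith
end
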